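/- For every k ≥ 1 and every t ≥ 0, the number of Dyck paths of length 2k that return to level 0 exactly t+1 times (counting the final return at time 2k) is at most (k^{3/2}/2^t)·C_k, where C_k is the k-th Catalan number. Equivalently, under the uniform probability measure on Dyck paths of length 2k, the probability that the path visits 0 exactly t+1 times after time 0 is at most k^{3/2}/2^t. -/
import Mathlib

open Finset

/-- A Dyck path of length `2k`, encoded by its heights `(x_0, …, x_{2k})`: it starts and
ends at `0`, moves by `±1` at each step, and stays nonnegative. -/
def IsDyckPath (k : ℕ) (P : Fin (2 * k + 1) → ℤ) : Prop :=
  P 0 = 0 ∧ P (Fin.last (2 * k)) = 0 ∧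
    (∀ i : Fin (2 * k), P i.succ - P i.castSucc = 1 ∨ P i.succ - P i.castSucc = -1) ∧
    ∀ i, 0 ≤ P i

/-- The number of visits of the path `P` to level `0` after time `0` (counting the final
return at time `2k`). -/
def zeroVisits {k : ℕ} (P : Fin (2 * k + 1) → ℤ) : ℕ :=
  (Finset.univ.filter fun i : Fin (2 * k + 1) => 0 < (i : ℕ) ∧ P i = 0).card

namespace DyckReturns

/-- indices of steps that end at a return to 0 -/
def RS (k : ℕ) (p : ℕ → ℤ) : Finset ℕ := (Finset.range (2*k)).filter fun l => p (l+1) = 0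

/-- number of return-steps with index `< i` -/
def qq (k : ℕ) (p : ℕ → ℤ) (i : ℕ) : ℕ := ((RS k p).filter fun l => l < i).card

/-- indices of up-steps -/
def US (k : ℕ) (p : ℕ → ℤ) : Finset ℕ := (Finset.range (2*k)).filter fun l => p (l+1) = p l + 1

/-- up-step indices after deleting return-steps -/
def AS (k : ℕ) (p : ℕ → ℤ) : Finset ℕ := (US k p).image fun l => l - qq k p l

/-- height of the reduced path -/
def W (A : Finset ℕ) (n : ℕ) : ℤ := 2 * (((A.filter fun x => x < n)).card : ℤ) - (n : ℤ)

structure Nice (k : ℕ) (p : ℕ → ℤ) : Prop where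
  h0 : p 0 = 0
  hend : p (2*k) = 0
  hstep : ∀ l < 2*k, p (l+1) = p l + 1 ∨ p (l+1) = p l - 1
  hpos : ∀ i ≤ 2*k, 0 ≤ p i

variable {k : ℕ} {p p' : ℕ → ℤ}

lemma card_filter_lt_succ (A : Finset ℕ) (n : ℕ) :
    ((A.filter fun x => x < n+1)).card = ((A.filter fun x => x < n)).card
      + (if n ∈ A then 1 else 0) := by
  have h : (A.filter fun x => x < n+1)
      = (A.filter fun x => x < n) ∪ (A.filter fun x => x = n) := by
    rw [← Finset.filter_or]
    apply Finset.filter_congr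
    intro x _
    constructor
    · intro hx; omega
    · intro hx; omega
  have hd : Disjoint (A.filter fun x => x < n) (A.filter fun x => x = n) := by
    simp only [Finset.disjoint_left, Finset.mem_filter]
    rintro a ⟨_, h1⟩ ⟨_, rfl⟩
    omega
  rw [h, Finset.card_union_of_disjoint hd, Finset.filter_eq']
  split <;> simp

lemma qq_succ (k : ℕ) (p : ℕ → ℤ) (i : ℕ) :
    qq k p (i+1) = qq k p i + (if i ∈ RS k p then 1 else 0) :=
  card_filter_lt_succ _ _

lemma qq_zero (k : ℕ) (p : ℕ → ℤ) : qq k p 0 = 0 := by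
  unfold qq
  rw [Finset.filter_false_of_mem, Finset.card_empty]
  intro x _
  omega

lemma qq_le_self (k : ℕ) (p : ℕ → ℤ) (i : ℕ) : qq k p i ≤ i := by
  calc ((RS k p).filter fun l => l < i).card
      ≤ (Finset.range i).card := by
        apply Finset.card_le_card
        intro x hx
        simp only [Finset.mem_filter] at hx
        simp only [Finset.mem_range]
        exact hx.2
    _ = i := Finset.card_range i

lemma qq_mono (k : ℕ) (p : ℕ → ℤ) {a b : ℕ} (h : a ≤ b) : qq k p a ≤ qq k p b := by
  apply Finset.card_le_card
  intro x hx
  simp only [Finset.mem_filter] at hx ⊢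
  exact ⟨hx.1, by omega⟩

lemma qq_le_card (k : ℕ) (p : ℕ → ℤ) (i : ℕ) : qq k p i ≤ (RS k p).card :=
  Finset.card_le_card (Finset.filter_subset _ _)

lemma qq_add (k : ℕ) (p : ℕ → ℤ) {a b : ℕ} (h : a ≤ b) : qq k p b ≤ qq k p a + (b - a) := by
  have hsub : ((RS k p).filter fun l => l < b)
      ⊆ ((RS k p).filter fun l => l < a) ∪ Finset.Ico a b := by
    intro x hx
    simp only [Finset.mem_filter] at hx
    simp only [Finset.mem_union, Finset.mem_filter, Finset.mem_Ico]
    by_cases hxa : x < a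
    · exact Or.inl ⟨hx.1, hxa⟩
    · exact Or.inr ⟨by omega, hx.2⟩
  calc qq k p b ≤ (((RS k p).filter fun l => l < a) ∪ Finset.Ico a b).card :=
        Finset.card_le_card hsub
    _ ≤ qq k p a + (Finset.Ico a b).card := Finset.card_union_le _ _
    _ = qq k p a + (b - a) := by rw [Nat.card_Ico]

lemma qq_top : qq k p (2*k) = (RS k p).card := by
  unfold qq
  congr 1
  apply Finset.filter_true_of_mem
  intro x hx
  exact Finset.mem_range.1 (Finset.mem_filter.1 hx).1

lemma rho_mono (k : ℕ) (p : ℕ → ℤ) {a b : ℕ} (h : a ≤ b) :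
    a - qq k p a ≤ b - qq k p b := by
  have h1 := qq_add k p h
  have h2 := qq_le_self k p a
  have h3 := qq_le_self k p b
  omega

lemma rho_strict (k : ℕ) (p : ℕ → ℤ) {a b : ℕ} (h : a < b) (ha : a ∉ RS k p) :
    a - qq k p a < b - qq k p b := by
  have h1 : qq k p (a+1) = qq k p a := by rw [qq_succ, if_neg ha]; omega
  have h2 := qq_add k p (show a + 1 ≤ b by omega)
  have h3 := qq_le_self k p a
  have h4 := qq_le_self k p b
  omega

lemma mem_RS {l : ℕ} (h : l ∈ RS k p) : l < 2*k ∧ p (l+1) = 0 := by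
  have := Finset.mem_filter.1 h
  exact ⟨Finset.mem_range.1 this.1, this.2⟩

lemma mem_US {l : ℕ} (h : l ∈ US k p) : l < 2*k ∧ p (l+1) = p l + 1 := by
  have := Finset.mem_filter.1 h
  exact ⟨Finset.mem_range.1 this.1, this.2⟩

lemma ret_one (hp : Nice k p) {l : ℕ} (h : l ∈ RS k p) : p l = 1 := by
  obtain ⟨hl, h0⟩ := mem_RS h
  rcases hp.hstep l hl with hs | hs
  · have := hp.hpos l (by omega)
    linarith
  · linarith

lemma us_not_rs (hp : Nice k p) {l : ℕ} (h : l ∈ US k p) : l ∉ RS k p := by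
  intro hR
  obtain ⟨hl, hu⟩ := mem_US h
  obtain ⟨_, h0⟩ := mem_RS hR
  have := hp.hpos l (by omega)
  linarith

lemma down_step (hp : Nice k p) {l : ℕ} (hl : l < 2*k) (h : l ∉ US k p) :
    p (l+1) = p l - 1 := by
  rcases hp.hstep l hl with hs | hs
  · exact absurd (Finset.mem_filter.2 ⟨Finset.mem_range.2 hl, hs⟩) h
  · exact hs

lemma card_US (hp : Nice k p) : (US k p).card = k := by
  have ht := Finset.sum_range_sub (fun i => p i) (2*k)
  rw [hp.hend, hp.h0, sub_zero] at ht
  have hsplit := Finset.sum_filter_add_sum_filter_not (Finset.range (2*k))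
    (fun l => p (l+1) = p l + 1) (fun l => p (l+1) - p l)
  have h1 : (∑ l ∈ (Finset.range (2*k)).filter (fun l => p (l+1) = p l + 1),
      (p (l+1) - p l)) = ((US k p).card : ℤ) := by
    rw [Finset.sum_congr rfl (fun x hx => ?_), Finset.sum_const, nsmul_eq_mul, mul_one]
    · rfl
    · have := (Finset.mem_filter.1 hx).2
      linarith
  have h2 : (∑ l ∈ (Finset.range (2*k)).filter (fun l => ¬ p (l+1) = p l + 1),
      (p (l+1) - p l)) = -((((Finset.range (2*k)).filter
        (fun l => ¬ p (l+1) = p l + 1)).card : ℤ)) := by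
    rw [Finset.sum_congr rfl (fun x hx => ?_), Finset.sum_const, nsmul_eq_mul, mul_neg_one]
    have hx' := Finset.mem_filter.1 hx
    have hxr := Finset.mem_range.1 hx'.1
    rcases hp.hstep x hxr with hs | hs
    · exact absurd hs hx'.2
    · linarith
  rw [h1, h2] at hsplit
  have hcards := Finset.card_filter_add_card_filter_not
    (s := Finset.range (2*k)) (p := fun l => p (l+1) = p l + 1)
  rw [Finset.card_range] at hcards
  rw [← hsplit] at ht
  have hus : (US k p).card = ((Finset.range (2*k)).filter (fun l => p (l+1) = p l + 1)).card := rfl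
  omega

lemma AS_lt (hp : Nice k p) {a : ℕ} (ha : a ∈ AS k p) : a < 2*k - (RS k p).card := by
  obtain ⟨u, hu, rfl⟩ := Finset.mem_image.1 ha
  obtain ⟨hu2k, _⟩ := mem_US hu
  have huR := us_not_rs hp hu
  have hsub : RS k p ⊆ ((RS k p).filter fun l => l < u) ∪ Finset.Ico (u+1) (2*k) := by
    intro r hr
    have hr2k := (mem_RS hr).1
    simp only [Finset.mem_union, Finset.mem_filter, Finset.mem_Ico]
    by_cases hru : r < u
    · exact Or.inl ⟨hr, hru⟩
    · refine Or.inr ⟨?_, hr2k⟩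
      rcases Nat.eq_or_lt_of_le (Nat.le_of_not_lt hru) with h | h
      · exact absurd (h ▸ hr) huR
      · omega
  have hcard : (RS k p).card ≤ qq k p u + (2*k - (u+1)) := by
    calc (RS k p).card ≤ (((RS k p).filter fun l => l < u) ∪ Finset.Ico (u+1) (2*k)).card :=
          Finset.card_le_card hsub
      _ ≤ qq k p u + (Finset.Ico (u+1) (2*k)).card := Finset.card_union_le _ _
      _ = qq k p u + (2*k - (u+1)) := by rw [Nat.card_Ico]
  have := qq_le_self k p u
  omega

lemma AS_injOn (hp : Nice k p) : Set.InjOn (fun l => l - qq k p l) (US k p) := by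
  intro u hu v hv huv
  simp only at huv
  rcases lt_trichotomy u v with h | h | h
  · have := rho_strict k p h (us_not_rs hp hu)
    omega
  · exact h
  · have := rho_strict k p h (us_not_rs hp hv)
    omega

lemma AS_card (hp : Nice k p) : (AS k p).card = k := by
  rw [AS, Finset.card_image_of_injOn (AS_injOn hp), card_US hp]

lemma mem_AS_iff (hp : Nice k p) {l : ℕ} (hl : l < 2*k) (hlR : l ∉ RS k p) :
    (l - qq k p l) ∈ AS k p ↔ l ∈ US k p := by
  constructor
  · intro h
    obtain ⟨u, hu, huv⟩ := Finset.mem_image.1 h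
    have huR := us_not_rs hp hu
    rcases lt_trichotomy u l with h' | h' | h'
    · have := rho_strict k p h' huR
      omega
    · exact h' ▸ hu
    · have := rho_strict k p h' hlR
      omega
  · intro h
    exact Finset.mem_image.2 ⟨l, h, rfl⟩

lemma W_succ (A : Finset ℕ) (n : ℕ) :
    W A (n+1) = W A n + (if n ∈ A then 1 else -1) := by
  unfold W
  rw [card_filter_lt_succ]
  split <;> push_cast <;> ring

lemma corr (hp : Nice k p) : ∀ i ≤ 2*k, W (AS k p) (i - qq k p i) = p i + qq k p i := by
  intro i
  induction i with
  | zero =>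
    intro _
    have h2 : ((AS k p).filter fun x => x < 0) = ∅ := by
      apply Finset.filter_false_of_mem
      intro x _
      omega
    rw [qq_zero]
    unfold W
    rw [h2, hp.h0]
    simp
  | succ i ih =>
    intro hi1
    have hi : i < 2*k := by omega
    have ihe := ih (by omega)
    have hqs := qq_le_self k p i
    by_cases hiR : i ∈ RS k p
    · have hq : qq k p (i+1) = qq k p i + 1 := by rw [qq_succ, if_pos hiR]
      have hpi : p i = 1 := ret_one hp hiR
      have hpi1 : p (i+1) = 0 := (mem_RS hiR).2
      have hidx : i + 1 - qq k p (i+1) = i - qq k p i := by omega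
      rw [hidx, ihe, hpi, hpi1, hq]
      push_cast
      ring
    · have hq : qq k p (i+1) = qq k p i := by rw [qq_succ, if_neg hiR]; omega
      have hidx : i + 1 - qq k p (i+1) = (i - qq k p i) + 1 := by omega
      rw [hidx, W_succ, ihe, hq]
      by_cases hiU : i ∈ US k p
      · rw [if_pos ((mem_AS_iff hp hi hiR).2 hiU), (mem_US hiU).2]
        ring
      · rw [if_neg (fun h => hiU ((mem_AS_iff hp hi hiR).1 h)), down_step hp hi hiU]
        ring

lemma rho_surj (k : ℕ) (p : ℕ → ℤ) :
    ∀ i, ∀ n, n ≤ i - qq k p i → ∃ i', i' ≤ i ∧ i' - qq k p i' = n := by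
  intro i
  induction i with
  | zero =>
    intro n hn
    exact ⟨0, le_refl _, by omega⟩
  | succ i ih =>
    intro n hn
    by_cases h : n ≤ i - qq k p i
    · obtain ⟨i', h1, h2⟩ := ih n h
      exact ⟨i', by omega, h2⟩
    · refine ⟨i+1, le_refl _, ?_⟩
      have h3 : qq k p (i+1) = qq k p i ∨ qq k p (i+1) = qq k p i + 1 := by
        rw [qq_succ]
        split <;> omega
      have h4 := qq_le_self k p i
      omega

lemma key_b (hp : Nice k p) {l n : ℕ} (hl : l ∈ RS k p)
    (h1 : l + 1 - qq k p (l+1) < n) (h2 : n ≤ 2*k - (RS k p).card) :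
    (qq k p (l+1) : ℤ) < W (AS k p) n := by
  obtain ⟨i, hi2k, hin⟩ := rho_surj k p (2*k) n (by rw [qq_top]; exact h2)
  have hli : l + 1 < i := by
    by_contra hcon
    have := rho_mono k p (show i ≤ l + 1 by omega)
    omega
  have hlk := (mem_RS hl).1
  have hcorr := corr hp i hi2k
  rw [hin] at hcorr
  by_cases hz : p i = 0
  · have him : i - 1 + 1 = i := by omega
    have hi1R : i - 1 ∈ RS k p := by
      apply Finset.mem_filter.2
      refine ⟨Finset.mem_range.2 (by omega), ?_⟩
      rw [him, hz]
    have hnotm : i - 1 ∉ ((RS k p).filter fun x => x < l+1) := by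
      simp only [Finset.mem_filter]
      rintro ⟨_, hc⟩
      omega
    have hsub : insert (i-1) ((RS k p).filter fun x => x < l+1)
        ⊆ ((RS k p).filter fun x => x < i) := by
      intro r hr
      rcases Finset.mem_insert.1 hr with rfl | hr'
      · exact Finset.mem_filter.2 ⟨hi1R, by omega⟩
      · have := Finset.mem_filter.1 hr'
        exact Finset.mem_filter.2 ⟨this.1, by omega⟩
    have hcard : qq k p (l+1) + 1 ≤ qq k p i := by
      have hc := Finset.card_le_card hsub
      rw [Finset.card_insert_of_notMem hnotm] at hc
      exact hc
    rw [hcorr, hz, zero_add]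
    exact_mod_cast (by omega : qq k p (l+1) < qq k p i)
  · have hpi : 1 ≤ p i := by
      have := hp.hpos i hi2k
      rcases this.lt_or_eq with h | h
      · omega
      · exact absurd h.symm hz
    have hqq : qq k p (l+1) ≤ qq k p i := qq_mono k p (by omega)
    rw [hcorr]
    have : (qq k p (l+1) : ℤ) ≤ (qq k p i : ℤ) := by exact_mod_cast hqq
    linarith

lemma crux (hp : Nice k p) (hp' : Nice k p')
    (hA : AS k p = AS k p') (hm : (RS k p).card = (RS k p').card)
    {i : ℕ} (hi : i < 2*k) (hpi : p i = p' i) (hqi : qq k p i = qq k p' i)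
    (hR : i ∈ RS k p) (hR' : i ∉ RS k p') : False := by
  have hp1 : p (i+1) = 0 := (mem_RS hR).2
  have hj : qq k p (i+1) = qq k p i + 1 := by rw [qq_succ, if_pos hR]
  set j := qq k p (i+1) with hjdef
  have hq' : qq k p' (i+1) = j - 1 := by
    rw [qq_succ, if_neg hR', ← hqi]
    omega
  have hjm : j ≤ (RS k p).card := qq_le_card k p (i+1)
  have hj1 : 1 ≤ j := by omega
  -- next return of p' after i
  have hFne : ((RS k p').filter fun r => i+1 ≤ r).Nonempty := by
    by_contra hcon
    have hemp := Finset.not_nonempty_iff_eq_empty.1 hcon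
    have hall : ∀ r ∈ RS k p', r < i + 1 := by
      intro r hr
      by_contra hc
      have : r ∈ (RS k p').filter fun r => i+1 ≤ r :=
        Finset.mem_filter.2 ⟨hr, by omega⟩
      rw [hemp] at this
      exact absurd this (Finset.notMem_empty r)
    have : qq k p' (i+1) = (RS k p').card := by
      unfold qq
      congr 1
      exact Finset.filter_true_of_mem hall
    omega
  set l' := ((RS k p').filter fun r => i+1 ≤ r).min' hFne with hl'def
  have hl'mem := Finset.min'_mem _ hFne
  have hl'RS : l' ∈ RS k p' := (Finset.mem_filter.1 hl'mem).1
  have hl'ge : i + 1 ≤ l' := (Finset.mem_filter.1 hl'mem).2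
  have hl'2k := (mem_RS hl'RS).1
  have hql' : qq k p' (l'+1) = j := by
    have hset : ((RS k p').filter fun x => x < l'+1)
        = insert l' ((RS k p').filter fun x => x < i+1) := by
      ext r
      simp only [Finset.mem_filter, Finset.mem_insert]
      constructor
      · rintro ⟨hr, hrl⟩
        by_cases hri : r < i+1
        · exact Or.inr ⟨hr, hri⟩
        · left
          have : r ∈ (RS k p').filter fun r => i+1 ≤ r :=
            Finset.mem_filter.2 ⟨hr, by omega⟩
          have := Finset.min'_le _ _ this
          omega
      · rintro (rfl | ⟨hr, hlt⟩)
        · exact ⟨hl'RS, by omega⟩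
        · exact ⟨hr, by omega⟩
    have hnm : l' ∉ ((RS k p').filter fun x => x < i+1) := by
      simp only [Finset.mem_filter]
      rintro ⟨_, hc⟩
      omega
    show ((RS k p').filter fun x => x < l'+1).card = j
    rw [hset, Finset.card_insert_of_notMem hnm]
    have : ((RS k p').filter fun x => x < i+1).card = j - 1 := hq'
    omega
  have hcorr' := corr hp' (l'+1) (by omega)
  rw [hql', (mem_RS hl'RS).2, zero_add] at hcorr'
  have hbnd := key_b hp hR (l := i) (n := l' + 1 - j)
    (by have := qq_le_self k p (i+1); omega)
    (by
      have h5 : l' + 1 - qq k p' (l'+1) ≤ 2*k - qq k p' (2*k) :=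
        rho_mono k p' (by omega)
      rw [hql'] at h5
      rw [qq_top (p := p')] at h5
      omega)
  rw [hA] at hbnd
  rw [hcorr'] at hbnd
  exact lt_irrefl _ hbnd

lemma eq_of_AS_eq (hp : Nice k p) (hp' : Nice k p')
    (hA : AS k p = AS k p') (hm : (RS k p).card = (RS k p').card) :
    ∀ i ≤ 2*k, p i = p' i ∧ qq k p i = qq k p' i := by
  intro i
  induction i with
  | zero =>
    intro _
    rw [hp.h0, hp'.h0, qq_zero, qq_zero]
    exact ⟨rfl, rfl⟩
  | succ i ih =>
    intro hi1
    have hi : i < 2*k := by omega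
    obtain ⟨hpi, hqi⟩ := ih (by omega)
    by_cases hiR : i ∈ RS k p
    · have hiR' : i ∈ RS k p' := by
        by_contra h'
        exact crux hp hp' hA hm hi hpi hqi hiR h'
      refine ⟨?_, ?_⟩
      · rw [(mem_RS hiR).2, (mem_RS hiR').2]
      · rw [qq_succ, qq_succ, if_pos hiR, if_pos hiR', hqi]
    · have hiR' : i ∉ RS k p' := fun h' =>
        crux hp' hp hA.symm hm.symm hi hpi.symm hqi.symm h' hiR
      have hq1 : qq k p (i+1) = qq k p i := by rw [qq_succ, if_neg hiR]; omega
      have hq1' : qq k p' (i+1) = qq k p' i := by rw [qq_succ, if_neg hiR']; omega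
      refine ⟨?_, by rw [hq1, hq1', hqi]⟩
      by_cases hiU : i ∈ US k p
      · have hν : (i - qq k p' i) ∈ AS k p' := by
          rw [← hqi, ← hA]
          exact (mem_AS_iff hp hi hiR).2 hiU
        have hiU' : i ∈ US k p' := (mem_AS_iff hp' hi hiR').1 hν
        rw [(mem_US hiU).2, (mem_US hiU').2, hpi]
      · have hiU' : i ∉ US k p' := by
          intro h
          apply hiU
          apply (mem_AS_iff hp hi hiR).1
          rw [hqi, hA]
          exact (mem_AS_iff hp' hi hiR').2 h
        rw [down_step hp hi hiU, down_step hp' hi hiU', hpi]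

/-- Transfer a Dyck path on `Fin (2k+1)` to a function `ℕ → ℤ`. -/
def pOf (k : ℕ) (P : Fin (2 * k + 1) → ℤ) : ℕ → ℤ :=
  fun i => P ⟨min i (2*k), by omega⟩

lemma nice_pOf {P : Fin (2 * k + 1) → ℤ} (hP : IsDyckPath k P) : Nice k (pOf k P) := by
  obtain ⟨h0, hend, hstep, hpos⟩ := hP
  refine ⟨?_, ?_, ?_, ?_⟩
  · have : (⟨min 0 (2*k), by omega⟩ : Fin (2*k+1)) = 0 := by
      ext
      simp
    rw [pOf, this, h0]
  · have : (⟨min (2*k) (2*k), by omega⟩ : Fin (2*k+1)) = Fin.last (2*k) := by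
      ext
      simp [Fin.last]
    rw [pOf, this, hend]
  · intro l hl
    have hstep' := hstep ⟨l, hl⟩
    have h1 : (⟨l, hl⟩ : Fin (2*k)).succ = (⟨min (l+1) (2*k), by omega⟩ : Fin (2*k+1)) := by
      ext
      simp [Fin.val_succ]
      omega
    have h2 : (⟨l, hl⟩ : Fin (2*k)).castSucc = (⟨min l (2*k), by omega⟩ : Fin (2*k+1)) := by
      ext
      simp [Fin.castSucc, Fin.castAdd, Fin.castLE]
      omega
    rw [h1, h2] at hstep'
    show pOf k P (l+1) = pOf k P l + 1 ∨ pOf k P (l+1) = pOf k P l - 1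
    unfold pOf
    rcases hstep' with h | h
    · left; linarith
    · right; linarith
  · intro i _
    exact hpos _

lemma card_RS_pOf {P : Fin (2 * k + 1) → ℤ} :
    (RS k (pOf k P)).card = zeroVisits P := by
  unfold zeroVisits
  apply Finset.card_bij (fun a ha => (⟨a+1, by
    have := Finset.mem_range.1 (Finset.mem_filter.1 ha).1
    omega⟩ : Fin (2*k+1)))
  · intro a ha
    have hmem := Finset.mem_filter.1 ha
    have ha2k := Finset.mem_range.1 hmem.1
    apply Finset.mem_filter.2
    refine ⟨Finset.mem_univ _, by simp, ?_⟩
    have : pOf k P (a+1) = P ⟨a+1, by omega⟩ := by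
      unfold pOf
      congr 1
      ext
      simp
      omega
    rw [← this]
    exact hmem.2
  · intro a ha b hb hab
    have := Fin.mk.injEq _ _ _ _ ▸ hab
    simpa using this
  · intro b hb
    have hmem := Finset.mem_filter.1 hb
    obtain ⟨_, hpos, hzero⟩ := hmem
    have hb2k : (b : ℕ) ≤ 2*k := by omega
    refine ⟨(b : ℕ) - 1, ?_, ?_⟩
    · apply Finset.mem_filter.2
      refine ⟨Finset.mem_range.2 (by omega), ?_⟩
      have h1 : (b:ℕ) - 1 + 1 = (b:ℕ) := by omega
      rw [h1]
      have : pOf k P (b:ℕ) = P b := by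
        unfold pOf
        congr 1
        ext
        simp
        omega
      rw [this]
      exact hzero
    · ext
      simp
      omega

lemma choose_double : ∀ j : ℕ, 1 ≤ k → 2^j * Nat.choose (2*k - j) k ≤ Nat.choose (2*k) k := by
  intro j hk
  induction j with
  | zero => simp
  | succ j ih =>
    by_cases hj : j < 2*k
    · have hstep : 2 * Nat.choose (2*k - (j+1)) k ≤ Nat.choose (2*k - j) k := by
        set n := 2*k - (j+1) with hn
        have hn1 : n + 1 = 2*k - j := by omega
        rw [← hn1]
        by_cases hnk : n < k
        · rw [Nat.choose_eq_zero_of_lt hnk]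
          omega
        · push_neg at hnk
          obtain ⟨k', rfl⟩ : ∃ k', k = k' + 1 := ⟨k - 1, by omega⟩
          rw [Nat.choose_succ_succ' n k']
          have hm : Nat.choose n (k'+1) * (k'+1) = Nat.choose n k' * (n - k') :=
            Nat.choose_succ_right_eq n k'
          have hle : n - k' ≤ k' + 1 := by omega
          have : Nat.choose n (k'+1) * (k'+1) ≤ Nat.choose n k' * (k'+1) := by
            rw [hm]
            exact Nat.mul_le_mul_left _ hle
          have h2 : Nat.choose n (k'+1) ≤ Nat.choose n k' :=
            Nat.le_of_mul_le_mul_right this (by omega)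
          omega
      calc 2^(j+1) * Nat.choose (2*k - (j+1)) k
          = 2^j * (2 * Nat.choose (2*k - (j+1)) k) := by ring
        _ ≤ 2^j * Nat.choose (2*k - j) k := Nat.mul_le_mul_left _ hstep
        _ ≤ Nat.choose (2*k) k := ih
    · have h1 : 2*k - (j+1) = 0 := by omega
      rw [h1, Nat.choose_eq_zero_of_lt (by omega : 0 < k)]
      simp

end DyckReturns

open DyckReturns in
/-- For every `k ≥ 1` and `t ≥ 0`, the number of Dyck paths of length `2k`
that return to level `0` exactly `t+1` times is at most `(k^{3/2}/2^t) · C_k`, where `C_k`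
is the `k`-th Catalan number; equivalently, under the uniform measure on Dyck paths of
length `2k` the probability of exactly `t+1` visits to `0` is at most `k^{3/2}/2^t`. -/
theorem dyck_paths_with_many_zero_returns_bound (k : ℕ) (hk : 1 ≤ k) (t : ℕ) :
    (Set.ncard {P : Fin (2 * k + 1) → ℤ | IsDyckPath k P ∧ zeroVisits P = t + 1} : ℝ) ≤
      (k : ℝ) ^ ((3 : ℝ) / 2) / 2 ^ t * catalan k := by
  have hcount : Set.ncard {P : Fin (2 * k + 1) → ℤ | IsDyckPath k P ∧ zeroVisits P = t + 1}
      ≤ Nat.choose (2*k - (t+1)) k := by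
    have hmain := Set.ncard_le_ncard_of_injOn
      (s := {P : Fin (2 * k + 1) → ℤ | IsDyckPath k P ∧ zeroVisits P = t + 1})
      (t := ((Finset.powersetCard k (Finset.range (2*k - (t+1)))) : Set (Finset ℕ)))
      (fun P : Fin (2 * k + 1) → ℤ => AS k (pOf k P))
      ?_ ?_ (Finset.finite_toSet _)
    · rwa [Set.ncard_coe_finset, Finset.card_powersetCard, Finset.card_range] at hmain
    · rintro P ⟨hP, hzv⟩
      have hp := nice_pOf hP
      have hcr : (RS k (pOf k P)).card = t + 1 := by
        rw [card_RS_pOf]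
        exact hzv
      apply Finset.mem_coe.2
      apply Finset.mem_powersetCard.2
      constructor
      · intro a ha
        apply Finset.mem_range.2
        have := AS_lt hp ha
        rw [hcr] at this
        exact this
      · exact AS_card hp
    · rintro P ⟨hP, hzv⟩ Q ⟨hQ, hzv'⟩ hAeq
      have hp := nice_pOf hP
      have hq := nice_pOf hQ
      have hm : (RS k (pOf k P)).card = (RS k (pOf k Q)).card := by
        rw [card_RS_pOf, card_RS_pOf, hzv, hzv']
      have heq := eq_of_AS_eq hp hq hAeq hm
      funext x
      have hx : (x : ℕ) ≤ 2*k := by omega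
      have := (heq (x : ℕ) hx).1
      have hPx : pOf k P (x : ℕ) = P x := by
        unfold pOf
        congr 1
        ext
        simp
        omega
      have hQx : pOf k Q (x : ℕ) = Q x := by
        unfold pOf
        congr 1
        ext
        simp
        omega
      rw [hPx, hQx] at this
      exact this
  have hchoose := choose_double (k := k) (t+1) hk
  have hcb : Nat.choose (2*k) k = (k+1) * catalan k := by
    rw [← Nat.centralBinom_eq_two_mul_choose, ← succ_mul_catalan_eq_centralBinom]
  have h2t : (0:ℝ) < 2 ^ t := by positivity
  rw [div_mul_eq_mul_div, le_div_iff₀ h2t]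
  have h1k : (1:ℝ) ≤ (k:ℝ) := by exact_mod_cast hk
  have hks : (k:ℝ) ≤ (k:ℝ) ^ ((3:ℝ)/2) := by
    calc (k:ℝ) = (k:ℝ) ^ (1:ℝ) := (Real.rpow_one _).symm
      _ ≤ (k:ℝ) ^ ((3:ℝ)/2) := Real.rpow_le_rpow_of_exponent_le h1k (by norm_num)
  have hc1 : (Set.ncard {P : Fin (2 * k + 1) → ℤ | IsDyckPath k P ∧ zeroVisits P = t + 1} : ℝ)
      ≤ ((2*k - (t+1)).choose k : ℝ) := by exact_mod_cast hcount
  have hc2 : (2:ℝ)^(t+1) * ((2*k - (t+1)).choose k : ℝ) ≤ ((k:ℝ)+1) * (catalan k : ℝ) := by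
    have : (2^(t+1) * Nat.choose (2*k - (t+1)) k : ℕ) ≤ ((k+1) * catalan k : ℕ) := by
      rw [← hcb]
      exact hchoose
    exact_mod_cast this
  have hcat : (0:ℝ) ≤ (catalan k : ℝ) := by positivity
  have hb : (0:ℝ) ≤ ((2*k - (t+1)).choose k : ℝ) := by positivity
  have hn : (0:ℝ) ≤ (Set.ncard {P : Fin (2 * k + 1) → ℤ | IsDyckPath k P ∧ zeroVisits P = t + 1} : ℝ) := by
    positivity
  have hpow : (2:ℝ)^(t+1) = 2 * 2^t := by ring
  nlinarith [mul_le_mul_of_nonneg_right hc1 (le_of_lt h2t),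
    mul_le_mul_of_nonneg_right hks hcat]
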